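/- Let n ≥ 4 and let φ be a permutation of I = {1,…,n}. The following are equivalent: (i) there is a special decomposition of 𝔐_{(n,φ)}; (ii) n = 4 and there is a subset X ⊂ I with |X| = 2 and φ(X) = X. -/

import Mathlib

abbrev MPoint (n : ℕ) := Fin n ⊕ Fin n

/-- The block `A_i = (A \ {a_i}) ∪ {b_i}`. -/
def Ablock (n : ℕ) (i : Fin n) : Set (MPoint n) :=
  Sum.inl '' {j | j ≠ i} ∪ {Sum.inr i}

/-- The block `B_i = (B \ {b_i}) ∪ {a_{φ(i)}}`. -/
def Bblock (n : ℕ) (φ : Equiv.Perm (Fin n)) (i : Fin n) : Set (MPoint n) :=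
  Sum.inr '' {j | j ≠ i} ∪ {Sum.inl (φ i)}

def ABlocks (n : ℕ) : Set (Set (MPoint n)) := Set.range (Ablock n)

def BBlocks (n : ℕ) (φ : Equiv.Perm (Fin n)) : Set (Set (MPoint n)) := Set.range (Bblock n φ)

/-- The blocks of the Möbius `n`-pair `𝔐_{(n,φ)}`; its point set is all of `MPoint n`. -/
def MBlocks (n : ℕ) (φ : Equiv.Perm (Fin n)) : Set (Set (MPoint n)) :=
  ABlocks n ∪ BBlocks n φ

/-- A "simplex" of a decomposition: a pair (points, blocks). -/
abbrev MSimplex (n : ℕ) := Set (MPoint n) × Set (Set (MPoint n))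

def SimplexA (n : ℕ) : MSimplex n := (Set.range Sum.inl, ABlocks n)

def SimplexB (n : ℕ) (φ : Equiv.Perm (Fin n)) : MSimplex n := (Set.range Sum.inr, BBlocks n φ)

/-- A decomposition of 𝔐_{(n,φ)} into two complementary mutually inscribed n-simplices. -/
def IsDecomp (n : ℕ) (φ : Equiv.Perm (Fin n)) (S₁ S₂ : MSimplex n) : Prop :=
  S₁.1 ∪ S₂.1 = Set.univ ∧ Disjoint S₁.1 S₂.1 ∧ S₁.1.ncard = n ∧ S₂.1.ncard = n ∧
  S₁.2 ∪ S₂.2 = MBlocks n φ ∧ Disjoint S₁.2 S₂.2 ∧ S₁.2.ncard = n ∧ S₂.2.ncard = n ∧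
  (∀ l ∈ S₁.2, (l ∩ S₁.1).ncard = n - 1 ∧ (l ∩ S₂.1).ncard = 1) ∧
  (∀ l ∈ S₂.2, (l ∩ S₂.1).ncard = n - 1 ∧ (l ∩ S₁.1).ncard = 1) ∧
  (∀ p ∈ S₁.1, {l ∈ S₁.2 | p ∈ l}.ncard = n - 1 ∧ {l ∈ S₂.2 | p ∈ l}.ncard = 1) ∧
  (∀ p ∈ S₂.1, {l ∈ S₂.2 | p ∈ l}.ncard = n - 1 ∧ {l ∈ S₁.2 | p ∈ l}.ncard = 1)

/-- A special decomposition: one in which both simplices differ from S_A and S_B. -/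
def IsSpecialDecomp (n : ℕ) (φ : Equiv.Perm (Fin n)) (S₁ S₂ : MSimplex n) : Prop :=
  IsDecomp n φ S₁ S₂ ∧
  S₁ ≠ SimplexA n ∧ S₁ ≠ SimplexB n φ ∧ S₂ ≠ SimplexA n ∧ S₂ ≠ SimplexB n φ

/-!
In a decomposition every block meets the point set `Q` of the opposite simplex in exactly one
point. For `A_i` this leaves at most two `a`-points in `Q`, and if there are exactly two, then
`a_i ∈ Q` and `b_i ∉ Q`; dually for `B_i` and the `b`-points.

If one simplex contains all `A`-blocks, the `B`-blocks all lie in the other one, and these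
constraints force the first simplex to be `S_A`. In a special decomposition both simplices
therefore contain `A`-blocks, so each point set contains at most two `a`-points: `n = 4`, and the
constraints become `b_k ∈ P ↔ a_k ∉ P` (from `A_k`) and `a_{φ k} ∈ P ↔ a_k ∈ P` (from `B_k`),
so `{k | a_k ∈ P}` is a `φ`-invariant pair. Conversely, for such a pair `Y` the points `a_i`
(`i ∈ Y`), `b_i` (`i ∉ Y`) with the blocks `A_i` (`i ∉ Y`), `B_i` (`i ∈ Y`) form a simplex whose
complement (`Y` replaced by `Yᶜ`) completes it to a special decomposition.
-/

open Set

section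

variable {α : Type*}

theorem Set.ncard_eq_ncard_preimage_inl_add_ncard_preimage_inr {β : Type*} [Finite α] [Finite β]
    (s : Set (α ⊕ β)) : s.ncard = (Sum.inl ⁻¹' s).ncard + (Sum.inr ⁻¹' s).ncard := by
  conv_lhs => rw [← Set.image_preimage_inl_union_image_preimage_inr s]
  rw [ncard_union_eq (disjoint_image_inl_image_inr) (toFinite _) (toFinite _),
    ncard_image_of_injective _ Sum.inl_injective, ncard_image_of_injective _ Sum.inr_injective]

theorem ncard_le_two_of_ncard_sdiff_singleton_add_eq_one {X : Set α} {a : α} {m : ℕ}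
    (h : (X \ {a}).ncard + m = 1) : X.ncard ≤ 2 := by
  have := pred_ncard_le_ncard_sdiff_singleton X a
  omega

theorem mem_and_notMem_of_ncard_sdiff_singleton_add_eq_one {X Y : Set α} {a b : α}
    (hX : X.ncard = 2) (h : (X \ {a}).ncard + (Y ∩ {b}).ncard = 1) : a ∈ X ∧ b ∉ Y := by
  have ha : a ∈ X := by
    by_contra ha
    rw [sdiff_singleton_eq_self ha] at h
    omega
  refine ⟨ha, fun hb => ?_⟩
  rw [ncard_sdiff_singleton_of_mem ha, inter_singleton_of_mem hb, ncard_singleton] at h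
  omega

end

theorem Fin.ncard_compl {n : ℕ} (X : Set (Fin n)) : Xᶜ.ncard = n - X.ncard := by
  rw [Set.ncard_compl, Nat.card_eq_fintype_card, Fintype.card_fin]

section

variable {n : ℕ} {φ : Equiv.Perm (Fin n)}

@[simp] theorem preimage_inl_Ablock (i : Fin n) : Sum.inl ⁻¹' Ablock n i = {i}ᶜ := by
  ext; simp [Ablock]

@[simp] theorem preimage_inr_Ablock (i : Fin n) : Sum.inr ⁻¹' Ablock n i = {i} := by
  ext; simp [Ablock]

@[simp] theorem preimage_inl_Bblock (i : Fin n) : Sum.inl ⁻¹' Bblock n φ i = {φ i} := by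
  ext; simp [Bblock]

@[simp] theorem preimage_inr_Bblock (i : Fin n) : Sum.inr ⁻¹' Bblock n φ i = {i}ᶜ := by
  ext; simp [Bblock]

@[simp] theorem setOf_inl_mem_Ablock (j : Fin n) : {i | Sum.inl j ∈ Ablock n i} = {j}ᶜ := by
  ext; simp [Ablock, eq_comm]

@[simp] theorem setOf_inr_mem_Ablock (j : Fin n) : {i | Sum.inr j ∈ Ablock n i} = {j} := by
  ext; simp [Ablock, eq_comm]

@[simp] theorem setOf_inl_mem_Bblock (j : Fin n) :
    {i | Sum.inl j ∈ Bblock n φ i} = {φ.symm j} := by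
  ext; simp [Bblock, Equiv.eq_symm_apply, eq_comm]

@[simp] theorem setOf_inr_mem_Bblock (j : Fin n) : {i | Sum.inr j ∈ Bblock n φ i} = {j}ᶜ := by
  ext; simp [Bblock, eq_comm]

theorem ncard_Ablock_inter (i : Fin n) (Q : Set (MPoint n)) :
    (Ablock n i ∩ Q).ncard = (Sum.inl ⁻¹' Q \ {i}).ncard + (Sum.inr ⁻¹' Q ∩ {i}).ncard := by
  rw [ncard_eq_ncard_preimage_inl_add_ncard_preimage_inr, preimage_inter, preimage_inter,
    preimage_inl_Ablock, preimage_inr_Ablock, inter_comm, sdiff_eq, inter_comm {i}]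

theorem ncard_Bblock_inter (i : Fin n) (Q : Set (MPoint n)) :
    (Bblock n φ i ∩ Q).ncard = (Sum.inl ⁻¹' Q ∩ {φ i}).ncard + (Sum.inr ⁻¹' Q \ {i}).ncard := by
  rw [ncard_eq_ncard_preimage_inl_add_ncard_preimage_inr, preimage_inter, preimage_inter,
    preimage_inl_Bblock, preimage_inr_Bblock, inter_comm, sdiff_eq, inter_comm {i}ᶜ]

theorem Ablock_injective : Function.Injective (Ablock n) := by
  intro i j h
  simpa using congrArg (Sum.inr ⁻¹' ·) h

theorem Bblock_injective : Function.Injective (Bblock n φ) := by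
  intro i j h
  simpa using congrArg (Sum.inr ⁻¹' ·) h

theorem disjoint_ABlocks_BBlocks (hn : 3 ≤ n) : Disjoint (ABlocks n) (BBlocks n φ) := by
  rw [disjoint_left]
  rintro _ ⟨i, rfl⟩ ⟨j, h⟩
  have := congrArg (fun l => (Sum.inr ⁻¹' l).ncard) h
  simp only [preimage_inr_Ablock, preimage_inr_Bblock, ncard_singleton, Fin.ncard_compl] at this
  omega

theorem ncard_ABlocks : (ABlocks n).ncard = n := by
  rw [ABlocks, ncard_range_of_injective Ablock_injective, Nat.card_eq_fintype_card,
    Fintype.card_fin]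

theorem ncard_image_Ablock_union_image_Bblock (hn : 3 ≤ n) (U V : Set (Fin n)) :
    (Ablock n '' U ∪ Bblock n φ '' V).ncard = U.ncard + V.ncard := by
  rw [ncard_union_eq ((disjoint_ABlocks_BBlocks hn).mono (image_subset_range _ _)
      (image_subset_range _ _)), ncard_image_of_injective _ Ablock_injective,
    ncard_image_of_injective _ Bblock_injective]

theorem ncard_sep_mem_image_Ablock_union_image_Bblock (hn : 3 ≤ n) (p : MPoint n)
    (U V : Set (Fin n)) :
    {l ∈ Ablock n '' U ∪ Bblock n φ '' V | p ∈ l}.ncard =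
      (U ∩ {i | p ∈ Ablock n i}).ncard + (V ∩ {i | p ∈ Bblock n φ i}).ncard := by
  rw [← ncard_image_Ablock_union_image_Bblock (φ := φ) hn]
  change _ = (Ablock n '' (U ∩ Ablock n ⁻¹' {l | p ∈ l}) ∪
    Bblock n φ '' (V ∩ Bblock n φ ⁻¹' {l | p ∈ l})).ncard
  rw [image_inter_preimage, image_inter_preimage, ← union_inter_distrib_right]
  rfl

theorem ncard_preimage_inl_le_two {i : Fin n} {Q : Set (MPoint n)}
    (h : (Ablock n i ∩ Q).ncard = 1) : (Sum.inl ⁻¹' Q).ncard ≤ 2 :=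
  ncard_le_two_of_ncard_sdiff_singleton_add_eq_one ((ncard_Ablock_inter i Q).symm.trans h)

theorem inl_mem_and_inr_notMem_of_Ablock {i : Fin n} {Q : Set (MPoint n)}
    (hQ : (Sum.inl ⁻¹' Q).ncard = 2) (h : (Ablock n i ∩ Q).ncard = 1) :
    Sum.inl i ∈ Q ∧ Sum.inr i ∉ Q :=
  mem_and_notMem_of_ncard_sdiff_singleton_add_eq_one (Y := Sum.inr ⁻¹' Q) hQ
    ((ncard_Ablock_inter i Q).symm.trans h)

theorem inr_mem_and_inl_notMem_of_Bblock {i : Fin n} {Q : Set (MPoint n)}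
    (hQ : (Sum.inr ⁻¹' Q).ncard = 2) (h : (Bblock n φ i ∩ Q).ncard = 1) :
    Sum.inr i ∈ Q ∧ Sum.inl (φ i) ∉ Q :=
  mem_and_notMem_of_ncard_sdiff_singleton_add_eq_one (Y := Sum.inl ⁻¹' Q) hQ
    ((add_comm _ _).trans ((ncard_Bblock_inter i Q).symm.trans h))

namespace IsDecomp

variable {S₁ S₂ : MSimplex n}

theorem symm (h : IsDecomp n φ S₁ S₂) : IsDecomp n φ S₂ S₁ := by
  obtain ⟨hP, hPd, hP₁, hP₂, hL, hLd, hL₁, hL₂, hl₁, hl₂, hp₁, hp₂⟩ := h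
  exact ⟨union_comm S₁.1 _ ▸ hP, hPd.symm, hP₂, hP₁, union_comm S₁.2 _ ▸ hL, hLd.symm, hL₂, hL₁,
    hl₂, hl₁, hp₂, hp₁⟩

theorem snd_fst_eq_compl (h : IsDecomp n φ S₁ S₂) : S₂.1 = S₁.1ᶜ :=
  (IsCompl.of_eq (h.2.1.eq_bot) (h.1.trans top_eq_univ.symm)).compl_eq.symm

theorem mem_snd_of_notMem_fst (h : IsDecomp n φ S₁ S₂) {l : Set (MPoint n)}
    (hl : l ∈ MBlocks n φ) (hl₁ : l ∉ S₁.2) : l ∈ S₂.2 := by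
  rw [← h.2.2.2.2.1] at hl
  exact hl.resolve_left hl₁

theorem ncard_inter_compl_eq_one (h : IsDecomp n φ S₁ S₂) {l : Set (MPoint n)} (hl : l ∈ S₁.2) :
    (l ∩ S₁.1ᶜ).ncard = 1 :=
  h.snd_fst_eq_compl ▸ (h.2.2.2.2.2.2.2.2.1 l hl).2

theorem ncard_inter_eq_one (h : IsDecomp n φ S₁ S₂) {l : Set (MPoint n)} (hl : l ∈ S₂.2) :
    (l ∩ S₁.1).ncard = 1 :=
  (h.2.2.2.2.2.2.2.2.2.1 l hl).2

theorem exists_ncard_inter_eq_one (h : IsDecomp n φ S₁ S₂) {l : Set (MPoint n)}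
    (hl : l ∈ MBlocks n φ) : ∃ Q, (Q = S₁.1 ∨ Q = S₁.1ᶜ) ∧ (l ∩ Q).ncard = 1 := by
  by_cases hl₁ : l ∈ S₁.2
  · exact ⟨_, Or.inr rfl, h.ncard_inter_compl_eq_one hl₁⟩
  · exact ⟨_, Or.inl rfl, h.ncard_inter_eq_one (h.mem_snd_of_notMem_fst hl hl₁)⟩

theorem eq_simplexA_of_ABlocks_subset (hn : 4 ≤ n) (h : IsDecomp n φ S₁ S₂)
    (hA : ABlocks n ⊆ S₁.2) : S₁ = SimplexA n := by
  set S := Sum.inl ⁻¹' S₁.1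
  set T := Sum.inr ⁻¹' S₁.1
  have hL : S₁.2 = ABlocks n :=
    (eq_of_subset_of_ncard_le hA (by rw [h.2.2.2.2.2.2.1, ncard_ABlocks]) (toFinite _)).symm
  have hST : S.ncard + T.ncard = n := by
    rw [← ncard_eq_ncard_preimage_inl_add_ncard_preimage_inr, h.2.2.1]
  have hT : T.ncard ≤ 2 := by
    have hSc : Sᶜ.ncard ≤ 2 := by
      simpa only [preimage_compl] using
        ncard_preimage_inl_le_two (h.ncard_inter_compl_eq_one (hA ⟨⟨0, by omega⟩, rfl⟩))
    rw [Fin.ncard_compl] at hSc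
    omega
  have hB : ∀ i ∉ T, (S ∩ {φ i}).ncard + T.ncard = 1 := by
    intro i hi
    have hBi := h.mem_snd_of_notMem_fst (Or.inr ⟨i, rfl⟩)
      (hL ▸ disjoint_right.mp (disjoint_ABlocks_BBlocks (by omega)) ⟨i, rfl⟩)
    rw [← sdiff_singleton_eq_self hi, ← ncard_Bblock_inter]
    exact h.ncard_inter_eq_one hBi
  obtain ⟨i₀, hi₀⟩ : ∃ i, i ∉ T := by
    by_contra! hT'
    rw [eq_univ_of_forall hT', ncard_univ, Nat.card_eq_fintype_card, Fintype.card_fin] at hT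
    omega
  have hT₀ : T = ∅ := by
    by_contra hne
    have hT₁ : T.ncard = 1 := by
      have := (ncard_pos (toFinite _)).mpr (nonempty_iff_ne_empty.mpr hne)
      have := hB i₀ hi₀
      omega
    have hφ : φ '' Tᶜ ⊆ Sᶜ := by
      rintro _ ⟨i, hi, rfl⟩ hiS
      have := hB i hi
      rw [inter_singleton_of_mem hiS, ncard_singleton] at this
      omega
    have := ncard_le_ncard hφ
    rw [ncard_image_of_injective _ φ.injective, Fin.ncard_compl, Fin.ncard_compl] at this
    omega
  have hS : S = univ := by
    rw [eq_univ_iff_ncard, Nat.card_eq_fintype_card, Fintype.card_fin]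
    rw [hT₀, ncard_empty] at hST
    omega
  refine Prod.ext ?_ hL
  rw [← image_preimage_inl_union_image_preimage_inr S₁.1]
  change Sum.inl '' S ∪ Sum.inr '' T = range Sum.inl
  rw [hS, hT₀, image_univ, image_empty, union_empty]

theorem eq_four_and_image_preimage_inl (hn : 4 ≤ n) (h : IsDecomp n φ S₁ S₂) {i j : Fin n}
    (hi : Ablock n i ∈ S₁.2) (hj : Ablock n j ∈ S₂.2) :
    n = 4 ∧ (Sum.inl ⁻¹' S₁.1).ncard = 2 ∧ φ '' (Sum.inl ⁻¹' S₁.1) = Sum.inl ⁻¹' S₁.1 := by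
  have hSc := ncard_preimage_inl_le_two (h.ncard_inter_compl_eq_one hi)
  have hS := ncard_preimage_inl_le_two (h.ncard_inter_eq_one hj)
  set P := S₁.1
  rw [preimage_compl, Fin.ncard_compl] at hSc
  have hS₂ : (Sum.inl ⁻¹' P).ncard = 2 := by omega
  refine ⟨by omega, hS₂, ?_⟩
  have hinl : ∀ Q, (Q = P ∨ Q = Pᶜ) → (Sum.inl ⁻¹' Q).ncard = 2 := by
    rintro Q (rfl | rfl)
    · exact hS₂
    · rw [preimage_compl, Fin.ncard_compl]; omega
  have hA : ∀ k, Sum.inr k ∈ P ↔ Sum.inl k ∉ P := by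
    intro k
    obtain ⟨Q, hQ, hk⟩ := h.exists_ncard_inter_eq_one (Or.inl ⟨k, rfl⟩)
    have hAk := inl_mem_and_inr_notMem_of_Ablock (hinl Q hQ) hk
    rcases hQ with rfl | rfl
    · tauto
    · simp only [mem_compl_iff, not_not] at hAk
      tauto
  have hinr : ∀ Q, (Q = P ∨ Q = Pᶜ) → (Sum.inr ⁻¹' Q).ncard = 2 := by
    have hPinr : Sum.inr ⁻¹' P = (Sum.inl ⁻¹' P)ᶜ := by ext k; exact hA k
    rintro Q (rfl | rfl)
    · rw [hPinr, Fin.ncard_compl]; omega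
    · rw [preimage_compl, hPinr, compl_compl, hS₂]
  have hB : ∀ k, Sum.inl (φ k) ∈ P ↔ Sum.inl k ∈ P := by
    intro k
    obtain ⟨Q, hQ, hk⟩ := h.exists_ncard_inter_eq_one (Or.inr ⟨k, rfl⟩)
    have hBk := inr_mem_and_inl_notMem_of_Bblock (hinr Q hQ) hk
    have hAk := hA k
    rcases hQ with rfl | rfl
    · tauto
    · simp only [mem_compl_iff, not_not] at hBk
      tauto
  calc φ '' (Sum.inl ⁻¹' P) = φ '' (φ ⁻¹' (Sum.inl ⁻¹' P)) := by
        congr 1; ext k; exact (hB k).symm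
    _ = Sum.inl ⁻¹' P := φ.image_preimage _

end IsDecomp

def mixedSimplex (φ : Equiv.Perm (Fin n)) (Y : Set (Fin n)) : MSimplex n :=
  (Sum.inl '' Y ∪ Sum.inr '' Yᶜ, Ablock n '' Yᶜ ∪ Bblock n φ '' Y)

section mixedSimplex

variable {Y : Set (Fin n)}

@[simp] theorem preimage_inl_mixedSimplex_fst : Sum.inl ⁻¹' (mixedSimplex φ Y).1 = Y := by
  simp [mixedSimplex, preimage_image_eq _ Sum.inl_injective]

@[simp] theorem preimage_inr_mixedSimplex_fst : Sum.inr ⁻¹' (mixedSimplex φ Y).1 = Yᶜ := by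
  simp [mixedSimplex, preimage_image_eq _ Sum.inr_injective]

theorem mixedSimplex_compl_fst : (mixedSimplex φ Yᶜ).1 = (mixedSimplex φ Y).1ᶜ := by
  ext (j | j) <;> simp [mixedSimplex]

theorem ncard_mixedSimplex_fst : (mixedSimplex φ Y).1.ncard = n := by
  rw [ncard_eq_ncard_preimage_inl_add_ncard_preimage_inr, preimage_inl_mixedSimplex_fst,
    preimage_inr_mixedSimplex_fst, ncard_add_ncard_compl, Nat.card_eq_fintype_card,
    Fintype.card_fin]

theorem ncard_inter_mixedSimplex_fst (hY : Y.ncard = 2) (hYc : Yᶜ.ncard = 2) (hφ : φ '' Y = Y)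
    {l : Set (MPoint n)} (hl : l ∈ (mixedSimplex φ Y).2) :
    (l ∩ (mixedSimplex φ Y).1).ncard = 3 ∧ (l ∩ (mixedSimplex φ Yᶜ).1).ncard = 1 := by
  have hφY : ∀ i ∈ Y, φ i ∈ Y := fun i hi => hφ ▸ mem_image_of_mem φ hi
  rcases hl with ⟨i, hi, rfl⟩ | ⟨i, hi, rfl⟩
  · rw [mem_compl_iff] at hi
    simp [ncard_Ablock_inter, sdiff_singleton_eq_self, hi, hY, hYc]
  · simp [ncard_Bblock_inter, sdiff_singleton_eq_self, hi, hφY i hi, hY, hYc]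

theorem ncard_sep_mem_mixedSimplex_snd (hn : 3 ≤ n) (hY : Y.ncard = 2) (hYc : Yᶜ.ncard = 2)
    (hφ : φ '' Y = Y) {p : MPoint n} (hp : p ∈ (mixedSimplex φ Y).1) :
    {l ∈ (mixedSimplex φ Y).2 | p ∈ l}.ncard = 3 ∧
      {l ∈ (mixedSimplex φ Yᶜ).2 | p ∈ l}.ncard = 1 := by
  have hφY : ∀ j, φ.symm j ∈ Y ↔ j ∈ Y := fun j => by rw [← mem_image_equiv, hφ]
  rcases hp with ⟨j, hj, rfl⟩ | ⟨j, hj, rfl⟩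
  all_goals
    simp only [mixedSimplex, compl_compl]
    rw [ncard_sep_mem_image_Ablock_union_image_Bblock hn,
      ncard_sep_mem_image_Ablock_union_image_Bblock hn]
  · simp [← Set.sdiff_eq, sdiff_singleton_eq_self, hj, hY, hYc, hφY]
  · rw [mem_compl_iff] at hj
    simp [← Set.sdiff_eq, sdiff_singleton_eq_self, hj, hY, hYc]

theorem mixedSimplex_snd_union_compl :
    (mixedSimplex φ Y).2 ∪ (mixedSimplex φ Yᶜ).2 = MBlocks n φ := by
  simp only [mixedSimplex, compl_compl]
  rw [union_union_union_comm, ← image_union, ← image_union, compl_union_self, union_compl_self,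
    image_univ, image_univ]
  rfl

theorem disjoint_mixedSimplex_snd_compl (hn : 3 ≤ n) :
    Disjoint (mixedSimplex φ Y).2 (mixedSimplex φ Yᶜ).2 := by
  have hAB := disjoint_ABlocks_BBlocks (φ := φ) hn
  simp only [mixedSimplex, compl_compl, disjoint_union_left, disjoint_union_right,
    disjoint_image_iff Ablock_injective, disjoint_image_iff Bblock_injective]
  exact ⟨⟨disjoint_compl_left, hAB.symm.mono (image_subset_range _ _) (image_subset_range _ _)⟩,
    hAB.mono (image_subset_range _ _) (image_subset_range _ _), disjoint_compl_right⟩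

theorem isDecomp_mixedSimplex (hY : Y.ncard = 2) (hYc : Yᶜ.ncard = 2) (hφ : φ '' Y = Y) :
    IsDecomp n φ (mixedSimplex φ Y) (mixedSimplex φ Yᶜ) := by
  obtain rfl : n = 4 := by rw [Fin.ncard_compl, hY] at hYc; omega
  have hφc : φ '' Yᶜ = Yᶜ := by rw [image_compl_eq φ.bijective, hφ]
  have hYcc : Yᶜᶜ.ncard = 2 := by rwa [compl_compl]
  have hblock := @ncard_inter_mixedSimplex_fst _ φ _ hYc hYcc hφc
  have hpoint := @ncard_sep_mem_mixedSimplex_snd _ φ _ (by norm_num) hYc hYcc hφc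
  simp only [compl_compl] at hblock hpoint
  have hsnd : ∀ Z : Set (Fin 4), Z.ncard = 2 → Zᶜ.ncard = 2 → (mixedSimplex φ Z).2.ncard = 4 :=
    fun Z hZ hZc => by
      rw [mixedSimplex, ncard_image_Ablock_union_image_Bblock (by norm_num), hZ, hZc]
  refine ⟨?_, ?_, ncard_mixedSimplex_fst, ncard_mixedSimplex_fst, mixedSimplex_snd_union_compl,
    disjoint_mixedSimplex_snd_compl (by norm_num), hsnd Y hY hYc, hsnd Yᶜ hYc hYcc,
    fun l hl => ncard_inter_mixedSimplex_fst hY hYc hφ hl, fun l hl => hblock hl,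
    fun p hp => ncard_sep_mem_mixedSimplex_snd (by norm_num) hY hYc hφ hp, fun p hp => hpoint hp⟩
  · rw [mixedSimplex_compl_fst, union_compl_self]
  · rw [mixedSimplex_compl_fst]
    exact disjoint_compl_right

theorem mixedSimplex_ne_simplexA (hY : Yᶜ.Nonempty) : mixedSimplex φ Y ≠ SimplexA n := by
  obtain ⟨j, hj⟩ := hY
  intro h
  have : Sum.inr j ∈ (mixedSimplex φ Y).1 := by simpa [mixedSimplex] using hj
  rw [h] at this
  simp [SimplexA] at this

theorem mixedSimplex_ne_simplexB (hY : Y.Nonempty) : mixedSimplex φ Y ≠ SimplexB n φ := by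
  obtain ⟨j, hj⟩ := hY
  intro h
  have : Sum.inl j ∈ (mixedSimplex φ Y).1 := by simpa [mixedSimplex] using hj
  rw [h] at this
  simp [SimplexB] at this

end mixedSimplex

theorem isSpecialDecomp_mixedSimplex {Y : Set (Fin n)} (hY : Y.ncard = 2) (hYc : Yᶜ.ncard = 2)
    (hφ : φ '' Y = Y) : IsSpecialDecomp n φ (mixedSimplex φ Y) (mixedSimplex φ Yᶜ) := by
  obtain ⟨x, hx⟩ := nonempty_of_ncard_ne_zero (by omega : Y.ncard ≠ 0)
  obtain ⟨y, hy⟩ := nonempty_of_ncard_ne_zero (by omega : Yᶜ.ncard ≠ 0)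
  exact ⟨isDecomp_mixedSimplex hY hYc hφ, mixedSimplex_ne_simplexA ⟨y, hy⟩,
    mixedSimplex_ne_simplexB ⟨x, hx⟩, mixedSimplex_ne_simplexA ⟨x, not_not_intro hx⟩,
    mixedSimplex_ne_simplexB ⟨y, hy⟩⟩

theorem IsSpecialDecomp.eq_four_and_exists_invariant_pair (hn : 4 ≤ n) {S₁ S₂ : MSimplex n}
    (h : IsSpecialDecomp n φ S₁ S₂) : n = 4 ∧ ∃ X : Set (Fin n), X.ncard = 2 ∧ φ '' X = X := by
  obtain ⟨hD, hA₁, -, hA₂, -⟩ := h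
  obtain ⟨i, hi⟩ : ∃ i, Ablock n i ∉ S₂.2 := by
    by_contra! hA
    exact hA₂ (hD.symm.eq_simplexA_of_ABlocks_subset hn (range_subset_iff.mpr hA))
  obtain ⟨j, hj⟩ : ∃ j, Ablock n j ∉ S₁.2 := by
    by_contra! hA
    exact hA₁ (hD.eq_simplexA_of_ABlocks_subset hn (range_subset_iff.mpr hA))
  obtain ⟨h4, hcard, hinv⟩ := hD.eq_four_and_image_preimage_inl hn
    (hD.symm.mem_snd_of_notMem_fst (Or.inl ⟨i, rfl⟩) hi)
    (hD.mem_snd_of_notMem_fst (Or.inl ⟨j, rfl⟩) hj)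
  exact ⟨h4, _, hcard, hinv⟩

end

/-- 𝔐_{(n,φ)} has a special decomposition iff n = 4 and φ preserves a 2-element subset of I. -/
theorem stmt7 (n : ℕ) (hn : 4 ≤ n) (φ : Equiv.Perm (Fin n)) :
    (∃ S₁ S₂ : MSimplex n, IsSpecialDecomp n φ S₁ S₂) ↔
      (n = 4 ∧ ∃ X : Set (Fin n), X.ncard = 2 ∧ φ '' X = X) := by
  refine ⟨fun ⟨_, _, h⟩ => h.eq_four_and_exists_invariant_pair hn, ?_⟩
  rintro ⟨rfl, X, hX, hφ⟩
  exact ⟨_, _, isSpecialDecomp_mixedSimplex hX (by rw [Fin.ncard_compl, hX]) hφ⟩
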